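/- arXiv:1909.08832 — 2 statements merged into one kernel-verified Lean document; each statement's English description precedes it below -/
import Mathlib

section
/- For γ = (α, β) ∈ [0, π/2)² with α, β < π/2, the inverse of the Kreĭn–Feller operator Δ_{ν,Λ} with Robin boundary conditions admits the kernel representation (Δ_{ν,Λ}^{-1} g)(x) = ∫ K_{α,β}(x,y) g(y) dν(y), where K_{α,β}(x,y) = A_{α,β}(1 + tan β − y)(tan α + x) + 1_{[0,x]}(y)(x − y) and A_{α,β} = −1/(1 + tan α + tan β). -/
open MeasureTheory Set Filter

/-- Distribution function of a measure on `[0,1]`. -/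
noncomputable def Fdist (μ : Measure ℝ) (x : ℝ) : ℝ := (μ (Set.Icc 0 x)).toReal

/-- Pseudo-inverse of the distribution function. -/
noncomputable def Finv (μ : Measure ℝ) (x : ℝ) : ℝ :=
  sInf {y ∈ Set.Icc (0:ℝ) 1 | x ≤ Fdist μ y}

/-- Topological support of a measure. -/
def msupport (μ : Measure ℝ) : Set ℝ := {x | ∀ U : Set ℝ, IsOpen U → x ∈ U → 0 < μ U}

/-! The Robin condition at `0` gives `f 0 = b tan α`; the one at `1`, together with
`f 1 = f 0 + b + ∫ (1 - y) g dν`, gives `b (1 + tan α + tan β) = ∫ y g dν - (1 + tan β) ∫ g dν`,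
which determines the slope `b` because `tan α, tan β ≥ 0`. Expanding the kernel, its integral
against `g` is `(tan α + x) b` plus the Volterra term `∫_{[0,x]} (x - y) g dν`, which is
`f x` by the defining identity. -/

lemma eq_mul_tan_of_mul_cos_sub_mul_sin_eq_zero {a b θ : ℝ} (hθ : Real.cos θ ≠ 0)
    (h : a * Real.cos θ - b * Real.sin θ = 0) : a = b * Real.tan θ := by
  rw [Real.tan_eq_sin_div_cos]
  field_simp
  linarith

lemma add_mul_tan_eq_zero_of_mul_cos_add_mul_sin_eq_zero {a b θ : ℝ} (hθ : Real.cos θ ≠ 0)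
    (h : a * Real.cos θ + b * Real.sin θ = 0) : a + b * Real.tan θ = 0 := by
  rw [Real.tan_eq_sin_div_cos]
  field_simp
  linarith

lemma cos_ne_zero_of_mem_Ico {θ : ℝ} (hθ : θ ∈ Ico 0 (Real.pi / 2)) : Real.cos θ ≠ 0 :=
  (Real.cos_pos_of_mem_Ioo ⟨by linarith [hθ.1, Real.pi_pos], hθ.2⟩).ne'

lemma tan_nonneg_of_mem_Ico {θ : ℝ} (hθ : θ ∈ Ico 0 (Real.pi / 2)) : 0 ≤ Real.tan θ :=
  Real.tan_nonneg_of_nonneg_of_le_pi_div_two hθ.1 hθ.2.le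

section Moments

variable {ν : Measure ℝ} {g : ℝ → ℝ}

lemma integrable_id_mul_of_ae_mem_Icc (hν : ∀ᵐ y ∂ν, y ∈ Icc (0 : ℝ) 1) (hg : Integrable g ν) :
    Integrable (fun y => y * g y) ν := by
  refine hg.bdd_mul (c := 1) aestronglyMeasurable_id ?_
  filter_upwards [hν] with y hy
  rw [Real.norm_eq_abs, abs_le]
  exact ⟨by linarith [hy.1], hy.2⟩

lemma integrable_indicator_Icc_sub_mul (hg : Integrable g ν) (x : ℝ) :
    Integrable (fun y => (Icc 0 x).indicator (fun y => x - y) y * g y) ν := by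
  refine hg.bdd_mul (c := |x|)
    ((measurable_const.sub measurable_id).indicator measurableSet_Icc).aestronglyMeasurable
    (ae_of_all _ fun y => ?_)
  by_cases hy : y ∈ Icc 0 x
  · rw [indicator_of_mem hy, Real.norm_eq_abs, abs_le, abs_of_nonneg (hy.1.trans hy.2)]
    constructor <;> linarith [hy.1, hy.2]
  · rw [indicator_of_notMem hy, norm_zero]
    exact abs_nonneg x

lemma integral_indicator_Icc_sub_mul (x : ℝ) :
    ∫ y, (Icc 0 x).indicator (fun y => x - y) y * g y ∂ν = ∫ y in Icc 0 x, (x - y) * g y ∂ν := by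
  rw [← integral_indicator measurableSet_Icc]
  congr 1
  funext y
  by_cases hy : y ∈ Icc 0 x <;> simp [hy]

lemma setIntegral_Icc_one_sub_mul (hν : ∀ᵐ y ∂ν, y ∈ Icc (0 : ℝ) 1) (hg : Integrable g ν) :
    ∫ y in Icc 0 1, (1 - y) * g y ∂ν = ∫ y, g y ∂ν - ∫ y, y * g y ∂ν := by
  rw [Measure.restrict_eq_self_of_ae_mem hν,
    ← integral_sub hg (integrable_id_mul_of_ae_mem_Icc hν hg)]
  congr 1
  funext y
  ring

lemma integral_kernel_mul (hν : ∀ᵐ y ∂ν, y ∈ Icc (0 : ℝ) 1) (hg : Integrable g ν)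
    (A c d x : ℝ) :
    ∫ y, (A * (c - y) * d + (Icc 0 x).indicator (fun y => x - y) y) * g y ∂ν
      = A * d * (c * ∫ y, g y ∂ν - ∫ y, y * g y ∂ν) + ∫ y in Icc 0 x, (x - y) * g y ∂ν := by
  have hyg := integrable_id_mul_of_ae_mem_Icc hν hg
  have hsplit : (fun y => (A * (c - y) * d + (Icc 0 x).indicator (fun y => x - y) y) * g y)
      = fun y => ((A * d * c) * g y + (-(A * d)) * (y * g y))
          + (Icc 0 x).indicator (fun y => x - y) y * g y := by
    funext y
    ring
  have hmoments : Integrable (fun y => (A * d * c) * g y + (-(A * d)) * (y * g y)) ν :=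
    (hg.const_mul _).add (hyg.const_mul _)
  rw [hsplit, integral_add hmoments (integrable_indicator_Icc_sub_mul hg x),
    integral_add (hg.const_mul _) (hyg.const_mul _), integral_const_mul, integral_const_mul,
    integral_indicator_Icc_sub_mul]
  ring

end Moments

theorem stmt_8_general (ν : Measure ℝ) [IsProbabilityMeasure ν]
    (hνc : ν (Set.Icc (0:ℝ) 1)ᶜ = 0)
    (α β : ℝ) (hα : α ∈ Set.Ico 0 (Real.pi/2)) (hβ : β ∈ Set.Ico 0 (Real.pi/2))
    (g : ℝ → ℝ) (hg : MemLp g 2 ν)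
    (f : ℝ → ℝ) (b : ℝ)
    (hf : ∀ x ∈ Set.Icc (0:ℝ) 1,
      f x = f 0 + b * x + ∫ y in Set.Icc 0 x, (x - y) * g y ∂ν)
    (hbc0 : f 0 * Real.cos α - b * Real.sin α = 0)
    (hbc1 : f 1 * Real.cos β + (b + ∫ y, g y ∂ν) * Real.sin β = 0) :
    ∀ x ∈ Set.Icc (0:ℝ) 1,
      f x = ∫ y,
        ((-(1 + Real.tan α + Real.tan β)⁻¹) * (1 + Real.tan β - y) * (Real.tan α + x)
          + Set.indicator (Set.Icc 0 x) (fun y => x - y) y) * g y ∂ν := by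
  intro x hx
  have hν : ∀ᵐ y ∂ν, y ∈ Icc (0 : ℝ) 1 := mem_ae_iff.mpr hνc
  have hgi : Integrable g ν := hg.integrable one_le_two
  have hf0 : f 0 = b * Real.tan α :=
    eq_mul_tan_of_mul_cos_sub_mul_sin_eq_zero (cos_ne_zero_of_mem_Ico hα) hbc0
  have hf1 : f 1 = f 0 + b + (∫ y, g y ∂ν - ∫ y, y * g y ∂ν) := by
    rw [hf 1 (right_mem_Icc.mpr zero_le_one), setIntegral_Icc_one_sub_mul hν hgi, mul_one]
  have hbc1' : f 1 + (b + ∫ y, g y ∂ν) * Real.tan β = 0 :=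
    add_mul_tan_eq_zero_of_mul_cos_add_mul_sin_eq_zero (cos_ne_zero_of_mem_Ico hβ) hbc1
  have hpos : 0 < 1 + Real.tan α + Real.tan β := by
    linarith [tan_nonneg_of_mem_Ico hα, tan_nonneg_of_mem_Ico hβ]
  have hb : b = -(1 + Real.tan α + Real.tan β)⁻¹
      * ((1 + Real.tan β) * ∫ y, g y ∂ν - ∫ y, y * g y ∂ν) := by
    field_simp
    linear_combination hbc1' - hf1 - hf0
  rw [integral_kernel_mul hν hgi, hf x hx, hf0, hb]
  ring

theorem stmt_8 (ν : Measure ℝ) [IsProbabilityMeasure ν]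
    (hνc : ν (Set.Icc (0:ℝ) 1)ᶜ = 0) (hν0 : ν {(0:ℝ)} = 0) (hν1 : ν {(1:ℝ)} = 0)
    (α β : ℝ) (hα : α ∈ Set.Ico 0 (Real.pi/2)) (hβ : β ∈ Set.Ico 0 (Real.pi/2))
    (g : ℝ → ℝ) (hg : MemLp g 2 ν)
    (f : ℝ → ℝ) (b : ℝ) (hfc : Continuous f)
    (hf : ∀ x ∈ Set.Icc (0:ℝ) 1,
      f x = f 0 + b * x + ∫ y in Set.Icc 0 x, (x - y) * g y ∂ν)
    (hbc0 : f 0 * Real.cos α - b * Real.sin α = 0)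
    (hbc1 : f 1 * Real.cos β + (b + ∫ y, g y ∂ν) * Real.sin β = 0) :
    ∀ x ∈ Set.Icc (0:ℝ) 1,
      f x = ∫ y,
        ((-(1 + Real.tan α + Real.tan β)⁻¹) * (1 + Real.tan β - y) * (Real.tan α + x)
          + Set.indicator (Set.Icc 0 x) (fun y => x - y) y) * g y ∂ν :=
  stmt_8_general ν hνc α β hα hβ g hg f b hf hbc0 hbc1
end

section
/- If λ ≠ 0 is an eigenvalue of the generalised Kreĭn–Feller operator Δ_{ν,μ} with eigenfunction f (i.e., Δ_{ν,μ} f = λ f with Robin boundary conditions γ), then λ is an eigenvalue of the classical Kreĭn–Feller operator Δ_{ν∘F_μ^{-1},Λ} with eigenfunction f ∘ F̌_μ^{-1} and the same boundary conditions; conversely if Δ_{ν∘F_μ^{-1},Λ} g = λ g then Δ_{ν,μ}(g ∘ F_μ) = λ (g ∘ F_μ). -/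
open MeasureTheory Set Filter

/-- "f is in the domain of the Kreĭn-Feller operator w.r.t. speed measure ρ and
scale F with Δf = h and derivative b at 0". -/
def KFdom (ρ : Measure ℝ) (F : ℝ → ℝ) (f h : ℝ → ℝ) (b : ℝ) : Prop :=
  ∀ x ∈ Set.Icc (0:ℝ) 1,
    f x = f 0 + b * F x + ∫ y in Set.Icc 0 x, (F x - F y) * h y ∂ρ

/-- Robin boundary conditions. -/
def Robin (ρ : Measure ℝ) (f h : ℝ → ℝ) (b α β : ℝ) : Prop :=
  f 0 * Real.cos α - b * Real.sin α = 0 ∧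
  f 1 * Real.cos β + (b + ∫ y in Set.Icc (0:ℝ) 1, h y ∂ρ) * Real.sin β = 0

/-! The map `Fdist μ` collapses each interval on which `μ` puts no mass, and a solution of
`Δ_{ν,μ} f = h` is constant on such an interval, since the kernel `Fdist μ x - Fdist μ y` vanishes
there. Hence `f ∘ Finv μ ∘ Fdist μ = f` on `[0,1]`, and the substitution `s = Fdist μ y`
transports the defining integral equation between `ν` and `ν ∘ (Fdist μ)⁻¹`. -/

section DistributionFunction

variable {μ : Measure ℝ}

lemma Fdist_nonneg (x : ℝ) : 0 ≤ Fdist μ x := ENNReal.toReal_nonneg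

lemma Fdist_mono [IsFiniteMeasure μ] : Monotone (Fdist μ) := fun _ _ hxy =>
  ENNReal.toReal_mono (measure_ne_top μ _) (measure_mono (Icc_subset_Icc le_rfl hxy))

lemma Fdist_le_one [IsProbabilityMeasure μ] (x : ℝ) : Fdist μ x ≤ 1 :=
  ENNReal.toReal_le_of_le_ofReal zero_le_one (by simpa using prob_le_one)

lemma Fdist_mem_Icc [IsProbabilityMeasure μ] (x : ℝ) : Fdist μ x ∈ Icc (0 : ℝ) 1 :=
  ⟨Fdist_nonneg x, Fdist_le_one x⟩

lemma Fdist_zero [NullSingletonClass μ] : Fdist μ 0 = 0 := by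
  simp [Fdist]

lemma Fdist_one [IsProbabilityMeasure μ] (hμc : μ (Icc (0 : ℝ) 1)ᶜ = 0) : Fdist μ 1 = 1 := by
  simp [Fdist, (prob_compl_eq_zero_iff measurableSet_Icc).1 hμc]

lemma Fdist_eq_cdf [IsProbabilityMeasure μ] (hμc : μ (Icc (0 : ℝ) 1)ᶜ = 0) :
    Fdist μ = ProbabilityTheory.cdf μ := by
  have hneg : μ (Ici (0 : ℝ))ᶜ = 0 :=
    measure_mono_null (compl_subset_compl.2 Icc_subset_Ici_self) hμc
  funext x
  rw [ProbabilityTheory.cdf_eq_real, measureReal_def, Fdist, ← Ici_inter_Iic, inter_comm,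
    measure_inter_conull hneg]

lemma continuous_Fdist [IsProbabilityMeasure μ] [NullSingletonClass μ]
    (hμc : μ (Icc (0 : ℝ) 1)ᶜ = 0) : Continuous (Fdist μ) := by
  rw [Fdist_eq_cdf hμc, continuous_iff_continuousAt]
  intro a
  rw [(ProbabilityTheory.monotone_cdf μ).continuousAt_iff_leftLim_eq_rightLim,
    StieltjesFunction.rightLim_eq]
  have hjump : (ProbabilityTheory.cdf μ).measure {a} = 0 := by
    rw [ProbabilityTheory.measure_cdf]; exact measure_singleton a
  rw [StieltjesFunction.measure_singleton, ENNReal.ofReal_eq_zero] at hjump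
  exact le_antisymm ((ProbabilityTheory.monotone_cdf μ).leftLim_le le_rfl) (sub_nonpos.1 hjump)

end DistributionFunction

section PseudoInverse

variable {μ : Measure ℝ}

lemma Finv_bddBelow (t : ℝ) : BddBelow {y ∈ Icc (0 : ℝ) 1 | t ≤ Fdist μ y} :=
  ⟨0, fun _ hy => hy.1.1⟩

lemma one_mem_Finv_set [IsProbabilityMeasure μ] (hμc : μ (Icc (0 : ℝ) 1)ᶜ = 0) {t : ℝ}
    (ht : t ≤ 1) : 1 ∈ {y ∈ Icc (0 : ℝ) 1 | t ≤ Fdist μ y} :=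
  ⟨right_mem_Icc.2 zero_le_one, by rwa [Fdist_one hμc]⟩

lemma Finv_mem_Icc [IsProbabilityMeasure μ] (hμc : μ (Icc (0 : ℝ) 1)ᶜ = 0) {t : ℝ} (ht : t ≤ 1) :
    Finv μ t ∈ Icc (0 : ℝ) 1 :=
  ⟨le_csInf ⟨1, one_mem_Finv_set hμc ht⟩ fun _ hy => hy.1.1,
    csInf_le (Finv_bddBelow t) (one_mem_Finv_set hμc ht)⟩

lemma Finv_zero : Finv μ 0 = 0 := by
  have : {y ∈ Icc (0 : ℝ) 1 | (0 : ℝ) ≤ Fdist μ y} = Icc 0 1 := by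
    ext y; simp [Fdist_nonneg]
  rw [Finv, this, csInf_Icc zero_le_one]

lemma Finv_of_one_lt [IsProbabilityMeasure μ] {t : ℝ} (ht : 1 < t) : Finv μ t = 0 := by
  have : {y ∈ Icc (0 : ℝ) 1 | t ≤ Fdist μ y} = ∅ :=
    eq_empty_of_forall_notMem fun y hy => (ht.trans_le hy.2).not_ge (Fdist_le_one y)
  rw [Finv, this, Real.sInf_empty]

lemma Finv_Fdist_le {y : ℝ} (hy : y ∈ Icc (0 : ℝ) 1) : Finv μ (Fdist μ y) ≤ y :=
  csInf_le (Finv_bddBelow _) ⟨hy, le_rfl⟩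

lemma Fdist_Finv [IsProbabilityMeasure μ] [NullSingletonClass μ] (hμc : μ (Icc (0 : ℝ) 1)ᶜ = 0)
    {t : ℝ} (ht : t ∈ Icc (0 : ℝ) 1) : Fdist μ (Finv μ t) = t := by
  set S := {y ∈ Icc (0 : ℝ) 1 | t ≤ Fdist μ y}
  have hFinv := Finv_mem_Icc hμc ht.2
  have hS : IsClosed S :=
    isClosed_Icc.inter (isClosed_Ici.preimage (continuous_Fdist hμc))
  have hge : t ≤ Fdist μ (Finv μ t) :=
    (hS.csInf_mem ⟨1, one_mem_Finv_set hμc ht.2⟩ (Finv_bddBelow t)).2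
  obtain ⟨y, hy, hyt⟩ : t ∈ Fdist μ '' Icc 0 (Finv μ t) :=
    intermediate_value_Icc hFinv.1 (continuous_Fdist hμc).continuousOn
      ⟨by rw [Fdist_zero]; exact ht.1, hge⟩
  have hle : Finv μ t ≤ y :=
    csInf_le (Finv_bddBelow t) ⟨⟨hy.1, hy.2.trans hFinv.2⟩, hyt.ge⟩
  rwa [le_antisymm hy.2 hle] at hyt

lemma Finv_monotoneOn [IsProbabilityMeasure μ] (hμc : μ (Icc (0 : ℝ) 1)ᶜ = 0) :
    MonotoneOn (Finv μ) (Iic 1) :=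
  fun _ _ _ ht₂ hst => csInf_le_csInf (Finv_bddBelow _) ⟨1, one_mem_Finv_set hμc ht₂⟩
    fun _ hy => ⟨hy.1, hst.trans hy.2⟩

lemma measurable_Finv [IsProbabilityMeasure μ] (hμc : μ (Icc (0 : ℝ) 1)ᶜ = 0) :
    Measurable (Finv μ) := by
  have hmono : Monotone fun t => Finv μ (min t 1) := fun s t hst =>
    Finv_monotoneOn hμc (min_le_right s 1) (min_le_right t 1) (min_le_min_right 1 hst)
  have heq : Finv μ = fun t => if t ≤ 1 then Finv μ (min t 1) else 0 := by
    funext t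
    split_ifs with ht
    · rw [min_eq_left ht]
    · exact Finv_of_one_lt (not_le.1 ht)
  rw [heq]
  exact Measurable.ite measurableSet_Iic hmono.measurable measurable_const

end PseudoInverse

section KreinFeller

variable {ν : Measure ℝ} {F f g h : ℝ → ℝ} {b : ℝ}

lemma KFdom.eq_of_scale_eq (hF : Monotone F) (hf : KFdom ν F f h b) {y y' : ℝ}
    (hy' : y' ∈ Icc (0 : ℝ) 1) (hy : y ∈ Icc (0 : ℝ) 1) (hle : y' ≤ y) (hFy : F y' = F y) :
    f y' = f y := by
  rw [hf y hy, hf y' hy', hFy,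
    setIntegral_eq_of_subset_of_forall_sdiff_eq_zero measurableSet_Icc
      (Icc_subset_Icc_right hle) fun z hz => ?_]
  have hz' : y' ≤ z := le_of_not_ge fun h => hz.2 ⟨hz.1.1, h⟩
  rw [le_antisymm (hF hz.1.2) (hFy ▸ hF hz'), sub_self, zero_mul]

/-- The substitution also picks up the points `y > x` with `F y = F x`; by `hψx` they do not
contribute. -/
lemma setIntegral_map_Icc (hF : Monotone F) (hF0 : 0 ≤ F 0) (hν : ∀ᵐ y ∂ν, 0 ≤ y)
    {ψ : ℝ → ℝ} (hψ : Measurable ψ) (x : ℝ)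
    (hψx : ∀ᵐ y ∂ν, x < y → F y = F x → ψ (F y) = 0) :
    ∫ s in Icc 0 (F x), ψ s ∂(ν.map F) = ∫ y in Icc 0 x, ψ (F y) ∂ν := by
  rw [setIntegral_map measurableSet_Icc hψ.aestronglyMeasurable hF.measurable.aemeasurable]
  refine setIntegral_eq_of_subset_of_ae_sdiff_eq_zero
    (measurableSet_Icc.preimage hF.measurable).nullMeasurableSet
    (fun y hy => ⟨hF0.trans (hF hy.1), hF hy.2⟩) ?_
  filter_upwards [hν, hψx] with y hy0 hyx hy
  have hxy : x < y := lt_of_not_ge fun h => hy.2 ⟨hy0, h⟩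
  exact hyx hxy (le_antisymm hy.1.2 (hF hxy.le))

lemma KFdom.comp_of_monotone (hF : Monotone F) (hF0 : F 0 = 0)
    (hFI : MapsTo F (Icc 0 1) (Icc 0 1)) (hν : ∀ᵐ y ∂ν, 0 ≤ y) (hh : Measurable h)
    (hg : KFdom (ν.map F) id g h b) : KFdom ν F (g ∘ F) (h ∘ F) b := by
  intro x hx
  have hψ : Measurable fun s => (F x - s) * h s := by fun_prop
  rw [Function.comp_apply, hg (F x) (hFI hx)]
  simp only [id, Function.comp_apply, hF0]
  rw [setIntegral_map_Icc hF hF0.ge hν hψ x (Eventually.of_forall fun y _ hyx => by simp [hyx])]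

end KreinFeller

section Transfer

variable {μ ν : Measure ℝ} [IsProbabilityMeasure μ] [NullSingletonClass μ] {f h : ℝ → ℝ} {b : ℝ}

lemma KFdom.apply_Finv_Fdist (hμc : μ (Icc (0 : ℝ) 1)ᶜ = 0) (hf : KFdom ν (Fdist μ) f h b)
    {y : ℝ} (hy : y ∈ Icc (0 : ℝ) 1) : f (Finv μ (Fdist μ y)) = f y :=
  hf.eq_of_scale_eq Fdist_mono (Finv_mem_Icc hμc (Fdist_le_one y)) hy (Finv_Fdist_le hy)
    (Fdist_Finv hμc (Fdist_mem_Icc y))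

lemma KFdom.comp_Finv (hμc : μ (Icc (0 : ℝ) 1)ᶜ = 0) (hν : ∀ᵐ y ∂ν, y ∈ Icc (0 : ℝ) 1)
    (hh : Measurable h) (hhflat : ∀ y ∈ Icc (0 : ℝ) 1, h (Finv μ (Fdist μ y)) = h y)
    (hf : KFdom ν (Fdist μ) f h b) :
    KFdom (ν.map (Fdist μ)) id (f ∘ Finv μ) (h ∘ Finv μ) b := by
  suffices key : ∀ x ∈ Icc (0 : ℝ) 1, f x = f 0 + b * Fdist μ x +
      ∫ s in Icc 0 (Fdist μ x), (Fdist μ x - s) * h (Finv μ s) ∂(ν.map (Fdist μ)) by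
    intro t ht
    simpa [Finv_zero, Fdist_Finv hμc ht] using key _ (Finv_mem_Icc hμc ht.2)
  intro x hx
  have hψ : Measurable fun s => (Fdist μ x - s) * h (Finv μ s) :=
    (measurable_const.sub measurable_id).mul (hh.comp (measurable_Finv hμc))
  rw [setIntegral_map_Icc Fdist_mono (Fdist_nonneg 0) (hν.mono fun _ hy => hy.1) hψ x
    (Eventually.of_forall fun y _ hyx => by simp [hyx])]
  rw [hf x hx]
  congr 1
  exact setIntegral_congr_fun measurableSet_Icc fun y hy => by
    rw [hhflat y ⟨hy.1, hy.2.trans hx.2⟩]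

lemma Robin.comp_Finv (hμc : μ (Icc (0 : ℝ) 1)ᶜ = 0) (hν : ∀ᵐ y ∂ν, y ∈ Icc (0 : ℝ) 1)
    (hh : Measurable h) (hhflat : ∀ y ∈ Icc (0 : ℝ) 1, h (Finv μ (Fdist μ y)) = h y)
    (hf : KFdom ν (Fdist μ) f h b) {α β : ℝ} (hR : Robin ν f h b α β) :
    Robin (ν.map (Fdist μ)) (f ∘ Finv μ) (h ∘ Finv μ) b α β := by
  have hone : Icc (0 : ℝ) 1 = Icc 0 (Fdist μ 1) := by rw [Fdist_one hμc]
  have hint : ∫ s in Icc (0 : ℝ) 1, h (Finv μ s) ∂(ν.map (Fdist μ)) =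
      ∫ y in Icc (0 : ℝ) 1, h y ∂ν := by
    have hright : ∀ᵐ y ∂ν, 1 < y → Fdist μ y = Fdist μ 1 → h (Finv μ (Fdist μ y)) = 0 :=
      hν.mono fun _ hy h1 => absurd hy.2 h1.not_ge
    rw [hone, setIntegral_map_Icc (ψ := fun s => h (Finv μ s)) Fdist_mono (Fdist_nonneg 0)
      (hν.mono fun _ hy => hy.1) (hh.comp (measurable_Finv hμc)) 1 hright, ← hone]
    exact setIntegral_congr_fun measurableSet_Icc hhflat
  have hf1 : f (Finv μ 1) = f 1 := by
    simpa [Fdist_one hμc] using hf.apply_Finv_Fdist hμc (right_mem_Icc.2 zero_le_one)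
  refine ⟨?_, ?_⟩
  · simpa [Finv_zero] using hR.1
  · simpa [hf1, hint] using hR.2

end Transfer

theorem stmt_14_general (μ ν : Measure ℝ) [IsProbabilityMeasure μ] [NullSingletonClass μ]
    (hμc : μ (Set.Icc (0:ℝ) 1)ᶜ = 0) (hνc : ν (Set.Icc (0:ℝ) 1)ᶜ = 0)
    (lam α β : ℝ) :
    (∀ (f : ℝ → ℝ) (b : ℝ), Continuous f →
      KFdom ν (Fdist μ) f (fun y => lam * f y) b →
      Robin ν f (fun y => lam * f y) b α β →
      KFdom (ν.map (Fdist μ)) id (f ∘ Finv μ) (fun y => lam * f (Finv μ y)) b ∧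
      Robin (ν.map (Fdist μ)) (f ∘ Finv μ) (fun y => lam * f (Finv μ y)) b α β) ∧
    (∀ (g : ℝ → ℝ) (b : ℝ), Continuous g →
      KFdom (ν.map (Fdist μ)) id g (fun y => lam * g y) b →
      KFdom ν (Fdist μ) (g ∘ Fdist μ) (fun y => lam * g (Fdist μ y)) b) := by
  have hν : ∀ᵐ y ∂ν, y ∈ Icc (0 : ℝ) 1 := hνc
  refine ⟨fun f b hfc hf hR => ?_, fun g b hgc hg => ?_⟩
  · have hh : Measurable fun y => lam * f y := by fun_prop
    have hflat : ∀ y ∈ Icc (0 : ℝ) 1, lam * f (Finv μ (Fdist μ y)) = lam * f y :=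
      fun y hy => by rw [hf.apply_Finv_Fdist hμc hy]
    exact ⟨hf.comp_Finv hμc hν hh hflat, hR.comp_Finv hμc hν hh hflat hf⟩
  · exact hg.comp_of_monotone Fdist_mono Fdist_zero (fun x _ => Fdist_mem_Icc x)
      (hν.mono fun _ hy => hy.1) (by fun_prop)

theorem stmt_14 (μ ν : Measure ℝ) [IsProbabilityMeasure μ] [IsProbabilityMeasure ν] [NullSingletonClass μ]
    (hμc : μ (Set.Icc (0:ℝ) 1)ᶜ = 0) (hνc : ν (Set.Icc (0:ℝ) 1)ᶜ = 0)
    (hν0 : ν {(0:ℝ)} = 0) (hν1 : ν {(1:ℝ)} = 0)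
    (hsupp : msupport ν ⊆ msupport μ)
    (lam α β : ℝ) (hlam : lam ≠ 0)
    (hα : α ∈ Set.Icc 0 (Real.pi/2)) (hβ : β ∈ Set.Icc 0 (Real.pi/2)) :
    (∀ (f : ℝ → ℝ) (b : ℝ), Continuous f →
      KFdom ν (Fdist μ) f (fun y => lam * f y) b →
      Robin ν f (fun y => lam * f y) b α β →
      KFdom (ν.map (Fdist μ)) id (f ∘ Finv μ) (fun y => lam * f (Finv μ y)) b ∧
      Robin (ν.map (Fdist μ)) (f ∘ Finv μ) (fun y => lam * f (Finv μ y)) b α β) ∧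
    (∀ (g : ℝ → ℝ) (b : ℝ), Continuous g →
      KFdom (ν.map (Fdist μ)) id g (fun y => lam * g y) b →
      KFdom ν (Fdist μ) (g ∘ Fdist μ) (fun y => lam * g (Fdist μ y)) b) :=
  stmt_14_general μ ν hμc hνc lam α β
end
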